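/- arXiv:2005.13760 — 5 statements merged into one kernel-verified Lean document; each statement's English description precedes it below -/
import Mathlib

section
/- Let α be a nonzero algebraic integer with minimal polynomial x^n + a_1 x^{n-1} + ... + a_{n-1} x + a_n over ℚ (with integer coefficients). If (a_n)^j divides (a_j)^n for all 1 ≤ j ≤ n, then α^n / a_n is an algebraic unit up to sign; more precisely α^n = (-1)^n a_n · u for some algebraic unit u. -/
/-!
Let `L` be a number field containing all conjugates `α₁, …, αₙ` of `α`, and `v` a finite place of
`L`. If `M = max v(αᵢ)` is attained by exactly `j` of the roots, then in the elementary symmetric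
function `e_j` the product of those `j` roots strictly dominates every other term, so
`v(a_j) = M ^ j`. Now `a_n ^ j ∣ a_j ^ n` gives `M ^ (jn) ≤ v(a_n) ^ j`, while
`v(a_n) = ∏ v(αᵢ) ≤ M ^ n`; hence `v(a_n) = M ^ n` and every `v(αᵢ)` equals `M`. So
`α ^ n / a_n` has valuation `1` at every finite place, i.e. it is a unit of `𝓞 L`.
-/

open Polynomial

theorem Finset.prod_lt_pow_card_of_exists_lt {ι Γ₀ : Type*} [LinearOrderedCommGroupWithZero Γ₀]
    {s : Finset ι} {f : ι → Γ₀} {M : Γ₀} (hle : ∀ i ∈ s, f i ≤ M) (hlt : ∃ i ∈ s, f i < M) :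
    ∏ i ∈ s, f i < M ^ s.card := by
  obtain ⟨i₀, hi₀, hi₀M⟩ := hlt
  have hM : 0 < M ^ s.card := pow_pos (zero_le.trans_lt hi₀M) _
  by_cases h0 : ∏ i ∈ s, f i = 0
  · rwa [h0]
  rw [← Finset.prod_const]
  refine Finset.prod_lt_prod (fun i hi => ?_) hle ⟨i₀, hi₀, hi₀M⟩
  exact zero_lt_iff.mpr fun h => h0 (Finset.prod_eq_zero hi h)

namespace Valuation

variable {R Γ₀ : Type*} [CommRing R] [LinearOrderedCommGroupWithZero Γ₀] (v : Valuation R Γ₀)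

/-- Of the terms of this elementary symmetric sum, only `∏_{v x = M} x` reaches `M ^ j`. -/
theorem map_esymm_card_filter_eq_pow_of_le [DecidableEq R] (s : Finset R) {M : Γ₀}
    (hM : ∀ x ∈ s, v x ≤ M) :
    v (s.val.esymm (s.filter (v · = M)).card) = M ^ (s.filter (v · = M)).card := by
  set T := s.filter (v · = M)
  have hvT : v (∏ x ∈ T, x) = M ^ T.card := by
    rw [map_prod, Finset.prod_congr rfl fun x hx => (Finset.mem_filter.mp hx).2, Finset.prod_const]
  rw [← Multiset.map_id' s.val, Finset.esymm_map_val,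
    v.map_sum_eq_of_lt (Finset.mem_powersetCard.mpr ⟨Finset.filter_subset _ _, rfl⟩), hvT]
  · intro t ht
    obtain ⟨ht, htT⟩ := Finset.mem_sdiff.mp ht
    obtain ⟨hts, htcard⟩ := Finset.mem_powersetCard.mp ht
    have hnot : ¬ t ⊆ T := fun h =>
      htT (Finset.mem_singleton.mpr (Finset.eq_of_subset_of_card_le h htcard.ge))
    obtain ⟨x, hxt, hxT⟩ := Finset.not_subset.mp hnot
    rw [hvT, map_prod, ← htcard]
    refine Finset.prod_lt_pow_card_of_exists_lt (fun y hy => hM y (hts hy)) ⟨x, hxt, ?_⟩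
    exact (hM x (hts hxt)).lt_of_ne fun h => hxT (Finset.mem_filter.mpr ⟨hts hxt, h⟩)

theorem pow_card_eq_map_prod_of_map_esymm_pow_le (s : Finset R)
    (h : ∀ j, 1 ≤ j → j ≤ s.card → v (s.val.esymm j) ^ s.card ≤ v (∏ x ∈ s, x) ^ j) :
    ∀ x ∈ s, v x ^ s.card = v (∏ x ∈ s, x) := by
  classical
  rcases s.eq_empty_or_nonempty with rfl | hs
  · simp
  obtain ⟨x₀, hx₀, hmax⟩ := s.exists_max_image v hs
  set M := v x₀
  set j := (s.filter (v · = M)).card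
  have hj : 1 ≤ j := Finset.card_pos.mpr ⟨x₀, Finset.mem_filter.mpr ⟨hx₀, rfl⟩⟩
  have hprod_le : v (∏ x ∈ s, x) ≤ M ^ s.card := by
    rw [map_prod]; exact Finset.prod_le_pow_card _ _ _ hmax
  have hprod_eq : v (∏ x ∈ s, x) = M ^ s.card := by
    refine hprod_le.antisymm ?_
    have := h j hj (Finset.card_filter_le _ _)
    rw [v.map_esymm_card_filter_eq_pow_of_le s hmax, ← pow_mul, mul_comm, pow_mul] at this
    exact (pow_le_pow_iff_left₀ zero_le zero_le (by omega)).mp this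
  intro x hx
  have hxM : v x = M := by
    refine (hmax x hx).antisymm (not_lt.mp fun hlt => ?_)
    have := Finset.prod_lt_pow_card_of_exists_lt hmax ⟨x, hx, hlt⟩
    rw [← map_prod, hprod_eq] at this
    exact lt_irrefl _ this
  rw [hxM, hprod_eq]

end Valuation

/-- The hypothesis says that the Newton polygon of `p` is a single segment. -/
theorem Polynomial.Splits.map_root_pow_natDegree_eq {K Γ₀ : Type*} [Field K]
    [LinearOrderedCommGroupWithZero Γ₀] (v : Valuation K Γ₀) {p : K[X]} (hsplit : p.Splits)
    (hmonic : p.Monic) (hsep : p.Separable)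
    (h : ∀ j, 1 ≤ j → j ≤ p.natDegree →
      v (p.coeff (p.natDegree - j)) ^ p.natDegree ≤ v (p.coeff 0) ^ j) :
    ∀ r ∈ p.roots, v r ^ p.natDegree = v (p.coeff 0) := by
  classical
  set s := p.roots.toFinset
  have hs : s.val = p.roots := Multiset.dedup_eq_self.mpr (nodup_roots hsep)
  have hcard : s.card = p.natDegree := by
    rw [Finset.card_def, hs, hsplit.natDegree_eq_card_roots]
  have hcoeff : ∀ j ≤ p.natDegree, v (p.coeff (p.natDegree - j)) = v (s.val.esymm j) := by
    intro j hj
    rw [coeff_eq_esymm_roots_of_splits hsplit (Nat.sub_le _ _), hmonic.leadingCoeff,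
      Nat.sub_sub_self hj, hs, one_mul, map_mul, map_pow, Valuation.map_neg, map_one, one_pow,
      one_mul]
  have hcoeff0 : v (p.coeff 0) = v (∏ x ∈ s, x) := by
    rw [hsplit.coeff_zero_eq_prod_roots_of_monic hmonic, map_mul, map_pow, Valuation.map_neg,
      map_one, one_pow, one_mul, Finset.prod_eq_multiset_prod, Multiset.map_id', hs]
  intro r hr
  rw [← hcard, hcoeff0]
  refine v.pow_card_eq_map_prod_of_map_esymm_pow_le s (fun j hj1 hjn => ?_) r
    (Multiset.mem_toFinset.mpr hr)
  rw [hcard] at hjn ⊢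
  rw [← hcoeff j hjn, ← hcoeff0]
  exact h j hj1 hjn

namespace IsDedekindDomain.HeightOneSpectrum

variable {R K : Type*} [CommRing R] [IsDedekindDomain R] [Field K] [Algebra R K]
  [IsFractionRing R K] (v : HeightOneSpectrum R)

theorem valuation_intCast_le_of_dvd {a b : ℤ} (h : a ∣ b) :
    v.valuation K b ≤ v.valuation K a := by
  obtain ⟨t, rfl⟩ := h
  have ht : v.valuation K t ≤ 1 := by
    simpa only [map_intCast] using v.valuation_le_one (K := K) (t : R)
  rw [Int.cast_mul, map_mul]
  exact mul_le_of_le_one_right' ht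

end IsDedekindDomain.HeightOneSpectrum

open IsDedekindDomain NumberField

theorem NumberField.isIntegral_of_forall_valuation_le_one {K : Type*} [Field K] [NumberField K]
    {x : K} (h : ∀ v : HeightOneSpectrum (𝓞 K), v.valuation K x ≤ 1) : IsIntegral ℤ x := by
  obtain ⟨y, rfl⟩ := HeightOneSpectrum.mem_integers_of_valuation_le_one K x h
  exact y.isIntegral_coe

theorem NumberField.isIntegral_and_isIntegral_inv_of_forall_valuation_eq_one {K : Type*} [Field K]
    [NumberField K] {x : K} (h : ∀ v : HeightOneSpectrum (𝓞 K), v.valuation K x = 1) :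
    IsIntegral ℤ x ∧ IsIntegral ℤ x⁻¹ :=
  ⟨isIntegral_of_forall_valuation_le_one fun v => (h v).le,
    isIntegral_of_forall_valuation_le_one fun v => by rw [map_inv₀, h v, inv_one]⟩

theorem NumberField.exists_pow_eq_neg_one_pow_mul_unit_of_pow_dvd_pow {K : Type*} [Field K]
    [NumberField K] {x : K} (hx0 : x ≠ 0)
    (hsplit : ((minpoly ℚ x).map (algebraMap ℚ K)).Splits)
    (n : ℕ) (hn : n = (minpoly ℚ x).natDegree) (a : ℕ → ℤ)
    (ha : ∀ j, 1 ≤ j → j ≤ n → (minpoly ℚ x).coeff (n - j) = (a j : ℚ))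
    (hdiv : ∀ j, 1 ≤ j → j ≤ n → (a n) ^ j ∣ (a j) ^ n) :
    ∃ u : K, IsIntegral ℤ u ∧ IsIntegral ℤ u⁻¹ ∧ x ^ n = (-1) ^ n * (a n : K) * u := by
  have hx : IsIntegral ℚ x := Algebra.IsIntegral.isIntegral x
  set p := (minpoly ℚ x).map (algebraMap ℚ K)
  have hn1 : 1 ≤ n := hn ▸ minpoly.natDegree_pos hx
  have hpdeg : p.natDegree = n := by rw [natDegree_map, hn]
  have hpcoeff : ∀ j, 1 ≤ j → j ≤ n → p.coeff (n - j) = (a j : K) := fun j hj1 hjn => by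
    rw [coeff_map, ha j hj1 hjn, map_intCast]
  have hpcoeff0 : p.coeff 0 = (a n : K) := by rw [← Nat.sub_self n, hpcoeff n hn1 le_rfl]
  have han : (a n : K) ≠ 0 := by
    rw [← hpcoeff0, coeff_map, map_ne_zero_iff _ (algebraMap ℚ K).injective]
    exact minpoly.coeff_zero_ne_zero hx hx0
  have hroot : x ∈ p.roots := by
    rw [mem_roots_map (minpoly.ne_zero hx), ← aeval_def, minpoly.aeval]
  have hvx : ∀ v : HeightOneSpectrum (𝓞 K), v.valuation K x ^ n = v.valuation K (a n) := by
    intro v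
    rw [← hpcoeff0, ← hpdeg]
    refine hsplit.map_root_pow_natDegree_eq (v.valuation K) ((minpoly.monic hx).map _)
      (minpoly.irreducible hx).separable.map (fun j hj1 hjn => ?_) x hroot
    rw [hpdeg] at hjn ⊢
    rw [hpcoeff j hj1 hjn, hpcoeff0, ← map_pow, ← map_pow, ← Int.cast_pow, ← Int.cast_pow]
    exact v.valuation_intCast_le_of_dvd (hdiv j hj1 hjn)
  have hval : ∀ v : HeightOneSpectrum (𝓞 K), v.valuation K ((-1) ^ n * x ^ n / a n) = 1 := by
    intro v
    rw [map_div₀, map_mul, map_pow, map_pow, Valuation.map_neg, map_one, one_pow, one_mul, hvx v,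
      div_self ((Valuation.ne_zero_iff _).mpr han)]
  obtain ⟨hu, hu'⟩ := isIntegral_and_isIntegral_inv_of_forall_valuation_eq_one hval
  refine ⟨_, hu, hu', ?_⟩
  field_simp
  rw [← pow_mul, pow_mul', neg_one_sq, one_pow]

theorem IntermediateField.exists_numberField_splits_minpoly {Ω : Type*} [Field Ω] [CharZero Ω]
    [IsAlgClosed Ω] {α : Ω} (hα : IsIntegral ℚ α) :
    ∃ L : IntermediateField ℚ Ω, NumberField L ∧
      ((minpoly ℚ α).map (algebraMap ℚ L)).Splits ∧ α ∈ L := by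
  let L := adjoin ℚ ((minpoly ℚ α).rootSet Ω)
  have : IsSplittingField ℚ L (minpoly ℚ α) :=
    adjoin_rootSet_isSplittingField (IsAlgClosed.splits _)
  have : FiniteDimensional ℚ L := IsSplittingField.finiteDimensional L (minpoly ℚ α)
  refine ⟨L, ⟨⟩, IsSplittingField.splits L _, subset_adjoin _ _ ?_⟩
  exact mem_rootSet.mpr ⟨minpoly.ne_zero hα, minpoly.aeval ℚ α⟩

/-- If a nonzero algebraic integer `α` has minimal polynomial
`x^n + a_1 x^(n-1) + ... + a_n` over `ℚ` and `(a_n)^j ∣ (a_j)^n` for all `1 ≤ j ≤ n`,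
then `α^n = (-1)^n a_n · u` for some algebraic unit `u`. -/
theorem stmt0 (α : ℂ) (hα0 : α ≠ 0) (hint : IsIntegral ℤ α)
    (n : ℕ) (hn : n = (minpoly ℚ α).natDegree)
    (a : ℕ → ℤ)
    (ha : ∀ j, 1 ≤ j → j ≤ n → (minpoly ℚ α).coeff (n - j) = (a j : ℚ))
    (hdiv : ∀ j, 1 ≤ j → j ≤ n → (a n) ^ j ∣ (a j) ^ n) :
    ∃ u : ℂ, IsIntegral ℤ u ∧ IsIntegral ℤ u⁻¹ ∧
      α ^ n = (-1) ^ n * (a n : ℂ) * u := by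
  obtain ⟨L, _, hsplit, hαL⟩ :=
    IntermediateField.exists_numberField_splits_minpoly hint.tower_top
  let αL : L := ⟨α, hαL⟩
  have hmin : minpoly ℚ αL = minpoly ℚ α := IntermediateField.minpoly_eq αL
  rw [← hmin] at hn ha hsplit
  obtain ⟨u, hu, hu', hαu⟩ := NumberField.exists_pow_eq_neg_one_pow_mul_unit_of_pow_dvd_pow
    (x := αL) (Subtype.coe_ne_coe.mp hα0) hsplit n hn a ha hdiv
  refine ⟨algebraMap L ℂ u, hu.algebraMap, map_inv₀ (algebraMap L ℂ) u ▸ hu'.algebraMap, ?_⟩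
  simpa using congrArg (algebraMap L ℂ) hαu
end

section
/- Let α be a totally positive algebraic integer of degree n ≥ 2 with minimal polynomial x^n - a_1 x^{n-1} + ... + (-1)^{n-1} a_{n-1} x + (-1)^n a_n. Suppose α is a d-number, i.e. (a_n)^j divides (a_j)^n for all 1 ≤ j ≤ n, and suppose for every prime p the exponent of p in a_n is strictly less than n. Then a_{n-1} ≥ a_n, i.e. the sum of the reciprocals of the Galois conjugates of α is at least 1. -/
open Polynomial

/-- Let `α` be a totally positive algebraic integer of degree `n ≥ 2` with minimal
polynomial `x^n - a_1 x^(n-1) + ... + (-1)^n a_n` (all `a_j > 0`). If `α` is a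
d-number (`a_n^j ∣ a_j^n`) and the exponent of every prime in `a_n` is `< n`, then
`a_{n-1} ≥ a_n`. -/
theorem stmt4 (α : ℂ) (hint : IsIntegral ℤ α)
    (n : ℕ) (hn : n = (minpoly ℚ α).natDegree) (hn2 : 2 ≤ n)
    (hpos : ∀ β ∈ (minpoly ℚ α).aroots ℂ, ∃ r : ℝ, β = (r : ℂ) ∧ 0 < r)
    (a : ℕ → ℤ) (hapos : ∀ j, 1 ≤ j → j ≤ n → 0 < a j)
    (ha : ∀ j, 1 ≤ j → j ≤ n →
      (minpoly ℚ α).coeff (n - j) = (-1 : ℚ) ^ j * (a j : ℚ))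
    (hdnum : ∀ j, 1 ≤ j → j ≤ n → (a n) ^ j ∣ (a j) ^ n)
    (hval : ∀ p : ℕ, p.Prime → (a n).natAbs.factorization p < n) :
    a n ≤ a (n - 1) := by
  have h1 : 1 ≤ n - 1 := by omega
  have h2 : n - 1 ≤ n := by omega
  have hA : 0 < a n := hapos n (by omega) le_rfl
  have hB : 0 < a (n - 1) := hapos (n - 1) h1 h2
  have hd : (a n) ^ (n - 1) ∣ (a (n - 1)) ^ n := hdnum (n - 1) h1 h2
  set x := (a n).natAbs with hxdef
  set y := (a (n - 1)).natAbs with hydef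
  have hx : x ≠ 0 := by simp [hxdef]; omega
  have hy : y ≠ 0 := by simp [hydef]; omega
  have hdvd : x ^ (n - 1) ∣ y ^ n := by
    have := Int.natAbs_dvd_natAbs.mpr hd
    simpa [Int.natAbs_pow] using this
  have hxy : x ∣ y := by
    rw [← Nat.factorization_le_iff_dvd hx hy]
    intro p
    by_cases hp : p.Prime
    · have key := (Nat.factorization_le_iff_dvd (pow_ne_zero _ hx)
        (pow_ne_zero _ hy)).mpr hdvd
      have := Finsupp.le_def.mp key p
      rw [Nat.factorization_pow, Nat.factorization_pow] at this
      simp only [Finsupp.smul_apply, smul_eq_mul] at this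
      have hv := hval p hp
      set e := x.factorization p
      set f := y.factorization p
      by_contra hfe
      push_neg at hfe
      have he : n * e = (n - 1) * e + e := by
        conv_lhs => rw [← Nat.sub_add_cancel (by omega : 1 ≤ n)]
        rw [add_mul, one_mul]
      have h4 : n * f + n ≤ n * e := by
        have := Nat.mul_le_mul_left n (by omega : f + 1 ≤ e)
        simpa [Nat.mul_succ] using this
      linarith
    · simp [Nat.factorization_eq_zero_of_not_prime _ hp]
  have hle : x ≤ y := Nat.le_of_dvd (Nat.pos_of_ne_zero hy) hxy
  omega
end

section
/- Let G be a finite abelian group of order g and k a positive integer. Consider the (g+1)×(g+1) symmetric integer matrix M with M_{ii} = g+1 for 1 ≤ i ≤ g, M_{ij} = 1 for distinct 1 ≤ i,j ≤ g, M_{i,g+1} = M_{g+1,i} = kg for 1 ≤ i ≤ g, and M_{g+1,g+1} = g(k²g+2). Then the eigenvalues of M are g with multiplicity g-1, together with the two roots of x² - g(k²g+4)x + g²(k²g+4). -/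
open Polynomial
set_option maxHeartbeats 1000000
set_option synthInstance.maxHeartbeats 400000

/-- Let `G` be a finite abelian group of order `g` and `k ≥ 1`. The `(g+1)×(g+1)`
matrix of the near-group fusion ring `N(G,k)` (tensoring with the regular element)
has eigenvalues `g` with multiplicity `g-1` together with the two roots of
`x² - g(k²g+4)x + g²(k²g+4)`; i.e. its characteristic polynomial factors as stated. -/
theorem stmt12 (G : Type) [CommGroup G] [Fintype G] (g k : ℕ)
    (hG : Fintype.card G = g) (hg : 1 ≤ g) (hk : 1 ≤ k) :
    (Matrix.of (fun i j' : Fin (g + 1) =>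
      if (i : ℕ) < g ∧ (j' : ℕ) < g then (if i = j' then (g : ℚ) + 1 else 1)
      else if (i : ℕ) < g ∨ (j' : ℕ) < g then (k : ℚ) * g
      else (g : ℚ) * ((k : ℚ) ^ 2 * g + 2))).charpoly
    = (X - C (g : ℚ)) ^ (g - 1) *
      (X ^ 2 - C ((g : ℚ) * ((k : ℚ) ^ 2 * g + 4)) * X
        + C ((g : ℚ) ^ 2 * ((k : ℚ) ^ 2 * g + 4))) := by
  classical
  set N : Matrix (Fin (g+1)) (Fin (g+1)) ℚ := Matrix.of (fun i j' : Fin (g + 1) =>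
      if (i : ℕ) < g ∧ (j' : ℕ) < g then (if i = j' then (g : ℚ) + 1 else 1)
      else if (i : ℕ) < g ∨ (j' : ℕ) < g then (k : ℚ) * g
      else (g : ℚ) * ((k : ℚ) ^ 2 * g + 2)) with hN
  
  let φ : ℚ[X] →+* (RatFunc ℚ) := (algebraMap ℚ[X] (RatFunc ℚ) : ℚ[X] →+* (RatFunc ℚ))
  have hinj : Function.Injective φ := IsFractionRing.injective ℚ[X] (RatFunc ℚ)
  apply hinj
  set t : (RatFunc ℚ) := φ X with ht
  set s : (RatFunc ℚ) := t - (g : (RatFunc ℚ)) with hsdef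
  have hs : s ≠ 0 := by
    have h0 : (X - C (g:ℚ) : ℚ[X]) ≠ 0 := X_sub_C_ne_zero _
    have h1 : φ (X - C (g:ℚ)) = s := by simp [map_sub, map_natCast, ht, hsdef]
    rw [← h1]
    exact fun h => h0 (hinj (by simpa using h))
  -- the rank-two decomposition
  set w : Fin (g+1) → (RatFunc ℚ) := fun i => if (i:ℕ) < g then 1 else (k:(RatFunc ℚ)) * g with hw
  set A : Matrix (Fin (g+1)) (Fin 2) (RatFunc ℚ) :=
    Matrix.of (fun i j => if j = 0 then w i else if (i:ℕ) < g then 0 else 1) with hA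
  set B : Matrix (Fin 2) (Fin (g+1)) (RatFunc ℚ) :=
    Matrix.of (fun i j => if i = 0 then w j else if (j:ℕ) < g then 0 else (g:(RatFunc ℚ))) with hB
  have hlast : ∀ i : Fin (g+1), ¬ (i:ℕ) < g → (i:ℕ) = g := by
    intro i h; have := i.isLt; omega
  have key : (Matrix.charmatrix N).map φ = s • (1 : Matrix (Fin (g+1)) (Fin (g+1)) (RatFunc ℚ)) - A * B := by
    ext i j
    simp only [Matrix.map_apply, Matrix.sub_apply, Matrix.smul_apply, Matrix.mul_apply,
      Fin.sum_univ_two, hA, hB, Matrix.of_apply, smul_eq_mul]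
    by_cases hij : i = j
    · subst hij
      rw [Matrix.charmatrix_apply_eq]
      by_cases hi : (i:ℕ) < g
      · simp [hN, hw, hi, Matrix.one_apply, hsdef, map_sub, map_natCast, ← ht]
        ring
      · simp [hN, hw, hi, Matrix.one_apply, hsdef, map_sub, map_natCast, map_mul, map_add,
          map_pow, map_ofNat, ← ht]
        push_cast
        ring
    · rw [Matrix.charmatrix_apply_ne _ _ _ hij]
      by_cases hi : (i:ℕ) < g <;> by_cases hj : (j:ℕ) < g
      · simp [hN, hw, hi, hj, hij, Matrix.one_apply, map_natCast]
      · simp [hN, hw, hi, hj, hij, Matrix.one_apply, map_natCast, map_mul, map_neg]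
      · simp [hN, hw, hi, hj, hij, Matrix.one_apply, map_natCast, map_mul, map_neg]
      · exact absurd (Fin.ext ((hlast i hi).trans (hlast j hj).symm)) hij
  have hBA : B * A = Matrix.of ![![(g:(RatFunc ℚ)) + (k:(RatFunc ℚ))^2*(g:(RatFunc ℚ))^2, (k:(RatFunc ℚ))*(g:(RatFunc ℚ))],
      ![(k:(RatFunc ℚ))*(g:(RatFunc ℚ))^2, (g:(RatFunc ℚ))]] := by
    ext i j
    fin_cases i <;> fin_cases j <;>
      simp [Matrix.mul_apply, hA, hB, hw, Fin.sum_univ_castSucc, Fin.is_lt] <;>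
      ring
  have hdet2 : (1 - s⁻¹ • (B * A)).det
      = (1 - s⁻¹ * ((g:(RatFunc ℚ)) + (k:(RatFunc ℚ))^2*(g:(RatFunc ℚ))^2)) * (1 - s⁻¹ * (g:(RatFunc ℚ)))
        - (s⁻¹ * ((k:(RatFunc ℚ))*(g:(RatFunc ℚ)))) * (s⁻¹ * ((k:(RatFunc ℚ))*(g:(RatFunc ℚ))^2)) := by
    rw [hBA, Matrix.det_fin_two]
    simp [Matrix.one_apply]
    try ring
  have lhs_eq : φ N.charpoly = s ^ (g+1) * ((1 - s⁻¹ * ((g:(RatFunc ℚ)) + (k:(RatFunc ℚ))^2*(g:(RatFunc ℚ))^2))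
        * (1 - s⁻¹ * (g:(RatFunc ℚ))) - (s⁻¹ * ((k:(RatFunc ℚ))*(g:(RatFunc ℚ)))) * (s⁻¹ * ((k:(RatFunc ℚ))*(g:(RatFunc ℚ))^2))) := by
    rw [Matrix.charpoly, RingHom.map_det, RingHom.mapMatrix_apply, key]
    have h2 : s • (1 : Matrix (Fin (g+1)) (Fin (g+1)) (RatFunc ℚ)) - A * B
        = s • ((1 : Matrix (Fin (g+1)) (Fin (g+1)) (RatFunc ℚ)) - s⁻¹ • (A * B)) := by
      rw [smul_sub, smul_smul, mul_inv_cancel₀ hs, one_smul]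
    rw [h2, Matrix.det_smul, Fintype.card_fin, ← Matrix.smul_mul,
      Matrix.det_one_sub_mul_comm, Matrix.mul_smul, hdet2]
  rw [lhs_eq]
  have rhs_eq : φ ((X - C (g : ℚ)) ^ (g - 1) *
      (X ^ 2 - C ((g : ℚ) * ((k : ℚ) ^ 2 * g + 4)) * X
        + C ((g : ℚ) ^ 2 * ((k : ℚ) ^ 2 * g + 4))))
      = s ^ (g-1) * (t^2 - ((g:(RatFunc ℚ)) * ((k:(RatFunc ℚ))^2 * g + 4)) * t
        + ((g:(RatFunc ℚ))^2 * ((k:(RatFunc ℚ))^2 * g + 4))) := by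
    simp [map_mul, map_pow, map_sub, map_add, map_natCast, map_ofNat, ← ht, hsdef]
    try push_cast
    try ring
  rw [rhs_eq]
  have hpow : s ^ (g+1) = s ^ (g-1) * s^2 := by rw [← pow_add]; congr 1; omega
  have ht' : t = s + g := by rw [hsdef]; ring
  rw [hpow, mul_assoc, ht']
  congr 1
  field_simp
  ring
end

section
/- Let κ ≥ 3 be an odd prime. Then [ℚ(sin(π/κ)) : ℚ(sin²(π/κ))] = 2 and [ℚ(sin²(π/κ)) : ℚ] = (κ-1)/2. -/
/-!
For a primitive `n`-th root of unity `ζ ∈ ℂ` with `n > 2`, the field `ℚ(ζ + ζ⁻¹)` is real while `ζ`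
is not, and `ζ` is a root of `X² - (ζ + ζ⁻¹) X + 1` over it; hence `[ℚ(cos (2πk/n)) : ℚ] = φ(n)/2`
for every `k` prime to `n`. Since `sin² (π/κ) = (1 - cos (2π/κ))/2` and
`sin (π/κ) = cos (2π(κ - 2)/4κ)` with `κ - 2` prime to `4κ`, the fields
`ℚ(sin² (π/κ)) ⊆ ℚ(sin (π/κ))` have degrees `φ(κ)/2` and `φ(4κ)/2 = φ(κ)` over `ℚ`, and the tower
law gives the relative degree `2`.
-/

open IntermediateField Polynomial Module ComplexConjugate Real
open scoped Nat

namespace IntermediateField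

variable {F E : Type*} [Field F] [Field E] [Algebra F E]

theorem finrank_mul_finrank_adjoin_simple_of_mem {α β : E} (hα : α ∈ F⟮β⟯) :
    finrank F F⟮α⟯ * finrank F⟮α⟯ F⟮α⟯⟮β⟯ = finrank F F⟮β⟯ := by
  have hrestrict : F⟮α⟯⟮β⟯.restrictScalars F = F⟮β⟯ := by
    rw [adjoin_simple_adjoin_simple]
    refine le_antisymm ?_ (adjoin.mono F _ _ (by simp))
    rw [adjoin_le_iff, Set.insert_subset_iff, Set.singleton_subset_iff]
    exact ⟨hα, mem_adjoin_simple_self F β⟩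
  rw [finrank_mul_finrank F F⟮α⟯ F⟮α⟯⟮β⟯, ← hrestrict]
  rfl

theorem adjoin_simple_algebraMap_mul_add {a : F} (ha : a ≠ 0) (b : F) (x : E) :
    F⟮algebraMap F E a * x + algebraMap F E b⟯ = F⟮x⟯ := by
  refine le_antisymm (adjoin_simple_le_iff.mpr ?_) (adjoin_simple_le_iff.mpr ?_)
  · exact add_mem (mul_mem (algebraMap_mem _ a) (mem_adjoin_simple_self F x)) (algebraMap_mem _ b)
  · set y := algebraMap F E a * x + algebraMap F E b
    have hx_eq : x = algebraMap F E a⁻¹ * (y - algebraMap F E b) := by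
      rw [add_sub_cancel_right, ← mul_assoc, ← map_mul, inv_mul_cancel₀ ha, map_one, one_mul]
    rw [hx_eq]
    exact mul_mem (algebraMap_mem _ _) (sub_mem (mem_adjoin_simple_self F y) (algebraMap_mem _ b))

theorem finrank_adjoin_simple_map {E' : Type*} [Field E'] [Algebra F E'] (f : E →ₐ[F] E')
    (x : E) : finrank F F⟮f x⟯ = finrank F F⟮x⟯ := by
  rw [← Set.image_singleton, ← adjoin_map]
  exact (equivMap F⟮x⟯ f).toLinearEquiv.finrank_eq.symm

theorem finrank_adjoin_simple_eq_two {K : IntermediateField F E} {α : E} (b c : K)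
    (hroot : α ^ 2 + b * α + c = 0) (hα : α ∉ K) :
    finrank K K⟮α⟯ = 2 := by
  set p : K[X] := X ^ 2 + C b * X + C c
  have hp : p.Monic := by unfold p; monicity!
  have hpdeg : p.natDegree = 2 := by unfold p; compute_degree!
  have hpα : aeval α p = 0 := by simpa [p] using hroot
  have hint : IsIntegral K α := ⟨p, hp, by simpa [aeval_def] using hpα⟩
  have hle : (minpoly K α).natDegree ≤ 2 :=
    hpdeg ▸ natDegree_le_natDegree (minpoly.degree_le_of_ne_zero K α hp.ne_zero hpα)
  have hne : (minpoly K α).natDegree ≠ 1 := fun h ↦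
    hα <| by obtain ⟨y, rfl⟩ := minpoly.natDegree_eq_one_iff.mp h; exact y.2
  have hpos := minpoly.natDegree_pos hint
  rw [adjoin.finrank hint]
  omega

end IntermediateField

theorem Complex.conj_eq_self_of_mem_adjoin_simple {x z : ℂ} (hx : conj x = x) (hz : z ∈ ℚ⟮x⟯) :
    conj z = z := by
  induction hz using adjoin_induction with
  | mem y hy => rwa [Set.mem_singleton_iff.mp hy]
  | algebraMap q => simp
  | add y w _ _ hy hw => rw [map_add, hy, hw]
  | inv y _ hy => rw [map_inv₀, hy]
  | mul y w _ _ hy hw => rw [map_mul, hy, hw]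

theorem IsPrimitiveRoot.finrank_adjoin_add_inv {ζ : ℂ} {n : ℕ} (hζ : IsPrimitiveRoot ζ n)
    (hn : 2 < n) : finrank ℚ ℚ⟮ζ + ζ⁻¹⟯ = φ n / 2 := by
  have hn0 : 0 < n := by omega
  have hζ0 : ζ ≠ 0 := hζ.ne_zero hn0.ne'
  have hconj : conj ζ = ζ⁻¹ := (Complex.inv_eq_conj (hζ.norm'_eq_one hn0.ne')).symm
  have hcyc : finrank ℚ ℚ⟮ζ⟯ = φ n := by
    rw [adjoin.finrank (hζ.isIntegral hn0).tower_top, ← cyclotomic_eq_minpoly_rat hζ hn0,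
      natDegree_cyclotomic]
  have hnot : ζ ∉ ℚ⟮ζ + ζ⁻¹⟯ := by
    intro hmem
    have hreal : conj (ζ + ζ⁻¹) = ζ + ζ⁻¹ := by rw [map_add, map_inv₀, hconj, inv_inv, add_comm]
    have hinv : ζ⁻¹ = ζ := hconj ▸ Complex.conj_eq_self_of_mem_adjoin_simple hreal hmem
    have hsq : ζ ^ 2 = 1 := by rw [sq]; nth_rewrite 1 [← hinv]; exact inv_mul_cancel₀ hζ0
    have := Nat.le_of_dvd two_pos (hζ.dvd_of_pow_eq_one 2 hsq)
    omega
  have hquad : finrank ℚ⟮ζ + ζ⁻¹⟯ ℚ⟮ζ + ζ⁻¹⟯⟮ζ⟯ = 2 := by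
    refine finrank_adjoin_simple_eq_two (-⟨ζ + ζ⁻¹, mem_adjoin_simple_self ℚ _⟩) 1 ?_ hnot
    push_cast
    field_simp
    ring
  have htower := finrank_mul_finrank_adjoin_simple_of_mem
    (add_mem (mem_adjoin_simple_self ℚ ζ) (inv_mem (mem_adjoin_simple_self ℚ ζ)))
  rw [hquad, hcyc] at htower
  omega

namespace Real

theorem finrank_adjoin_cos_two_pi_mul_div {k n : ℕ} (hk : k.Coprime n) (hn : 2 < n) :
    finrank ℚ ℚ⟮cos (2 * π * k / n)⟯ = φ n / 2 := by
  set ζ := Complex.exp (2 * π * Complex.I * (k / n))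
  have hζ : IsPrimitiveRoot ζ n := Complex.isPrimitiveRoot_exp_of_coprime k n (by omega) hk
  have hsum : ζ + ζ⁻¹ = Complex.ofRealHom.toRatAlgHom
      (algebraMap ℚ ℝ 2 * cos (2 * π * k / n) + algebraMap ℚ ℝ 0) := by
    simp only [ζ, ← Complex.exp_neg, map_ofNat, map_zero, add_zero]
    show _ = ((2 * cos (2 * π * k / n) : ℝ) : ℂ)
    push_cast
    rw [Complex.cos]
    ring_nf
  rw [← hζ.finrank_adjoin_add_inv hn, hsum, finrank_adjoin_simple_map,
    adjoin_simple_algebraMap_mul_add two_ne_zero]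

theorem finrank_adjoin_sin_sq_pi_div {n : ℕ} (hn : 2 < n) :
    finrank ℚ ℚ⟮sin (π / n) ^ 2⟯ = φ n / 2 := by
  have hsq : sin (π / n) ^ 2 =
      algebraMap ℚ ℝ (-1 / 2) * cos (2 * π * (1 : ℕ) / n) + algebraMap ℚ ℝ (1 / 2) := by
    rw [sin_sq_eq_half_sub, Nat.cast_one, mul_one, mul_div_assoc]
    simp only [map_div₀, map_neg, map_one, map_ofNat]
    ring
  rw [hsq, adjoin_simple_algebraMap_mul_add (by norm_num),
    finrank_adjoin_cos_two_pi_mul_div (Nat.coprime_one_left n) hn]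

theorem finrank_adjoin_sin_pi_div {n : ℕ} (hodd : Odd n) (hn : 2 < n) :
    finrank ℚ ℚ⟮sin (π / n)⟯ = φ n := by
  have hsin : sin (π / n) = cos (2 * π * (n - 2 : ℕ) / (4 * n : ℕ)) := by
    rw [← cos_pi_div_two_sub, Nat.cast_sub hn.le]
    push_cast
    congr 1
    field_simp
    ring
  have hcop : (n - 2).Coprime (4 * n) := by
    refine Nat.Coprime.mul_right ?_ ((Nat.coprime_self_sub_left hn.le).mpr ?_)
    · exact Nat.Coprime.pow_right 2
        (Nat.coprime_two_right.mpr (Nat.Odd.sub_even hn.le hodd even_two))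
    · exact Nat.coprime_two_left.mpr hodd
  have htot : φ (4 * n) = 2 * φ n := by
    rw [Nat.totient_mul (Nat.Coprime.pow_left 2 (Nat.coprime_two_left.mpr hodd))]
    rfl
  rw [hsin, finrank_adjoin_cos_two_pi_mul_div hcop (by omega), htot]
  omega

end Real

/-- For an odd prime `κ ≥ 3`, `[ℚ(sin(π/κ)) : ℚ(sin²(π/κ))] = 2` and
`[ℚ(sin²(π/κ)) : ℚ] = (κ-1)/2`. -/
theorem stmt17 (κ : ℕ) (hκ : κ.Prime) (hodd : Odd κ) (h3 : 3 ≤ κ)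
    (s t : ℝ) (hs : s = Real.sin (Real.pi / κ)) (ht : t = s ^ 2) :
    Module.finrank ℚ⟮t⟯ ℚ⟮t⟯⟮s⟯ = 2 ∧
    Module.finrank ℚ ℚ⟮t⟯ = (κ - 1) / 2 := by
  subst hs ht
  have hsq := finrank_adjoin_sin_sq_pi_div (n := κ) (by omega)
  have hsin := finrank_adjoin_sin_pi_div hodd (by omega)
  have htower := finrank_mul_finrank_adjoin_simple_of_mem
    (pow_mem (mem_adjoin_simple_self ℚ (sin (π / κ))) 2)
  obtain ⟨m, hm⟩ := Nat.totient_even (n := κ) (by omega)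
  rw [Nat.totient_prime hκ] at hsq hsin hm
  have hdeg_sq : finrank ℚ ℚ⟮sin (π / κ) ^ 2⟯ = m := by omega
  rw [hdeg_sq, hsin] at htower
  exact ⟨Nat.eq_of_mul_eq_mul_left (by omega : 0 < m) (by omega), hsq⟩
end

section
/- Let α, β be nonzero algebraic integers contained in some cyclotomic field, both of which are d-numbers (i.e. σ(α)/α and σ(β)/β are algebraic integers for every automorphism σ of the algebraic closure of ℚ), and let L = ℚ(α, β). Then β divides α in the ring of algebraic integers if and only if the integer N_L(β) divides N_L(α), where N_L denotes the field norm from L to ℚ. -/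
/-!
Let `m = [E : ℚ]`. The norm of `x ∈ E` is the product of its `m` images `τ x` under the
embeddings `τ : E → ℂ`, and every such `τ` extends to an automorphism of `ℂ` (first to the
algebraic closure of `ℚ` in `ℂ`, which is normal, then along a transcendence basis). Hence for a
d-number `x` all quotients `τ x / x` and `x / τ x` are algebraic integers, so `x ^ m` and `N(x)`
are associates among the algebraic integers. If `N(β) ∣ N(α)`, then
`(α / β) ^ m = (N(α) / N(β)) · (α ^ m / N(α)) · (N(β) / β ^ m)` is an algebraic integer, and so
is `α / β`. Conversely, the norm is multiplicative and maps algebraic integers to integers.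
-/

open IntermediateField

theorem IsAlgClosed.exists_ringEquiv_extend {k K : Type*} [Field k] [Field K] [IsAlgClosed K]
    [Algebra k K] (φ : k ≃+* k) :
    ∃ g : K ≃+* K, ∀ x, g (algebraMap k K x) = algebraMap k K (φ x) := by
  obtain ⟨s, hs⟩ := exists_isTranscendenceBasis k K
  have := IsAlgClosed.isAlgClosure_of_transcendence_basis _ hs
  let e := hs.1.aevalEquiv
  let φT := (e.symm.toRingEquiv.trans (MvPolynomial.mapEquiv s φ)).trans e.toRingEquiv
  have hφT (x : k) : φT (algebraMap k _ x) = algebraMap k _ (φ x) := by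
    simp only [φT, RingEquiv.trans_apply, AlgEquiv.coe_ringEquiv,
      AlgEquiv.commutes, MvPolynomial.algebraMap_eq, MvPolynomial.mapEquiv_apply, MvPolynomial.map_C]
    exact e.commutes (φ x)
  refine ⟨IsAlgClosure.equivOfEquiv K K φT, fun x => ?_⟩
  rw [IsScalarTower.algebraMap_apply k (Algebra.adjoin k (Set.range ((↑) : s → K))) K,
    IsAlgClosure.equivOfEquiv_algebraMap, hφT, ← IsScalarTower.algebraMap_apply]

theorem IsAlgClosed.exists_ringEquiv_extend_algHom {F K : Type*} [Field F] [Field K]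
    [IsAlgClosed K] [Algebra F K] (L : IntermediateField F K) [Algebra.IsAlgebraic F L]
    (σ : L →ₐ[F] K) : ∃ g : K ≃+* K, ∀ x : L, g x = σ x := by
  let Qb := algebraicClosure F K
  have hL : L ≤ Qb := (le_algebraicClosure_iff F K L).mpr ‹_›
  let _ : Algebra L Qb := (inclusion hL).toAlgebra
  have : IsScalarTower F L Qb := .of_algebraMap_eq fun _ => rfl
  have : Algebra.IsAlgebraic L Qb := .tower_top (K := F) L
  obtain ⟨ψ, rfl⟩ := IsAlgClosed.surjective_domRestrict_of_isAlgebraic (E := Qb) (M := K) σ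
  obtain ⟨g, hg⟩ := IsAlgClosed.exists_ringEquiv_extend (K := K) (ψ.restrictNormal' Qb).toRingEquiv
  exact ⟨g, fun x => (hg (algebraMap L Qb x)).trans (ψ.restrictNormal_commutes Qb _)⟩

theorem exists_intCast_eq_norm_of_isIntegral {L : Type*} [Field L] [Algebra ℚ L]
    [FiniteDimensional ℚ L] {x : L} (hx : IsIntegral ℤ x) :
    ∃ k : ℤ, (k : ℚ) = Algebra.norm ℚ x :=
  IsIntegrallyClosed.isIntegral_iff.mp (Algebra.isIntegral_norm ℚ hx)

theorem norm_dvd_norm_of_eq_mul {L : Type*} [Field L] [Algebra ℚ L] [FiniteDimensional ℚ L]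
    {x y z : L} (hz : IsIntegral ℤ z) (h : x = y * z) {Nx Ny : ℤ}
    (hNx : (Nx : ℚ) = Algebra.norm ℚ x) (hNy : (Ny : ℚ) = Algebra.norm ℚ y) : Ny ∣ Nx := by
  obtain ⟨k, hk⟩ := exists_intCast_eq_norm_of_isIntegral hz
  refine ⟨k, Int.cast_injective (α := ℚ) ?_⟩
  rw [Int.cast_mul, hNx, hNy, hk, h, map_mul]

section DNumber

variable {K : Type*} [Field K] [CharZero K] [IsAlgClosed K]
  {E : IntermediateField ℚ K} [FiniteDimensional ℚ E] {x : E}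

theorem isIntegral_embedding_div_self (hd : ∀ σ : K ≃+* K, IsIntegral ℤ (σ x / x))
    (τ : E →ₐ[ℚ] K) : IsIntegral ℤ (τ x / x) := by
  obtain ⟨g, hg⟩ := IsAlgClosed.exists_ringEquiv_extend_algHom E τ
  -- `hg` is stated for `E.algebra'`, `τ` for the defeq instance `DivisionRing.toRatAlgebra`
  have hτ : τ x = g x := (hg x).symm
  rw [hτ]
  exact hd g

theorem isIntegral_self_div_embedding (hd : ∀ σ : K ≃+* K, IsIntegral ℤ (σ x / x))
    (τ : E →ₐ[ℚ] K) : IsIntegral ℤ (x / τ x) := by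
  obtain ⟨g, hg⟩ := IsAlgClosed.exists_ringEquiv_extend_algHom E τ
  have hτ : τ x = g x := (hg x).symm
  have : (x / τ x : K) = g (g.symm x / x) := by rw [map_div₀, g.apply_symm_apply, hτ]
  rw [this]
  exact (hd g.symm).map g.toRingHom.toIntAlgHom

theorem isIntegral_norm_div_pow_finrank (hd : ∀ σ : K ≃+* K, IsIntegral ℤ (σ x / x)) :
    IsIntegral ℤ (algebraMap ℚ K (Algebra.norm ℚ x) / (x : K) ^ Module.finrank ℚ E) := by
  rw [Algebra.norm_eq_prod_embeddings ℚ K, ← AlgHom.card ℚ E K, ← Finset.card_univ,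
    ← Finset.prod_const, ← Finset.prod_div_distrib]
  exact IsIntegral.prod _ fun τ _ => isIntegral_embedding_div_self hd τ

theorem isIntegral_pow_finrank_div_norm (hd : ∀ σ : K ≃+* K, IsIntegral ℤ (σ x / x)) :
    IsIntegral ℤ ((x : K) ^ Module.finrank ℚ E / algebraMap ℚ K (Algebra.norm ℚ x)) := by
  rw [Algebra.norm_eq_prod_embeddings ℚ K, ← AlgHom.card ℚ E K, ← Finset.card_univ,
    ← Finset.prod_const, ← Finset.prod_div_distrib]
  exact IsIntegral.prod _ fun τ _ => isIntegral_self_div_embedding hd τ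

theorem isIntegral_div_of_norm_dvd_norm {α β : E} (hα0 : α ≠ 0)
    (hαd : ∀ σ : K ≃+* K, IsIntegral ℤ (σ α / α)) (hβd : ∀ σ : K ≃+* K, IsIntegral ℤ (σ β / β))
    {Nα Nβ : ℤ} (hNα : (Nα : ℚ) = Algebra.norm ℚ α) (hNβ : (Nβ : ℚ) = Algebra.norm ℚ β)
    (h : Nβ ∣ Nα) : IsIntegral ℤ ((α : K) / β) := by
  obtain ⟨c, rfl⟩ := h
  have hα := isIntegral_pow_finrank_div_norm hαd
  have hβ := isIntegral_norm_div_pow_finrank hβd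
  rw [← hNα, map_intCast] at hα
  rw [← hNβ, map_intCast] at hβ
  have hNα0 : ((Nβ * c : ℤ) : K) ≠ 0 := by
    rw [Int.cast_ne_zero, ← Int.cast_ne_zero (α := ℚ), hNα]
    exact Algebra.norm_ne_zero_iff.mpr hα0
  have hpow : ((α : K) / β) ^ Module.finrank ℚ E =
      c * ((α : K) ^ Module.finrank ℚ E / (Nβ * c : ℤ)) *
        ((Nβ : K) / β ^ Module.finrank ℚ E) := by
    push_cast at hNα0 ⊢
    obtain ⟨hNβ0, hc0⟩ := mul_ne_zero_iff.mp hNα0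
    field_simp
    rw [div_pow]
  refine IsIntegral.of_pow (Module.finrank_pos (R := ℚ) (M := E)) ?_
  rw [hpow]
  exact ((isIntegral_algebraMap (x := c)).mul hα).mul hβ

theorem dvd_iff_norm_dvd_norm {α β : E} (hα0 : α ≠ 0) (hβ0 : β ≠ 0)
    (hαd : ∀ σ : K ≃+* K, IsIntegral ℤ (σ α / α)) (hβd : ∀ σ : K ≃+* K, IsIntegral ℤ (σ β / β))
    {Nα Nβ : ℤ} (hNα : (Nα : ℚ) = Algebra.norm ℚ α) (hNβ : (Nβ : ℚ) = Algebra.norm ℚ β) :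
    (∃ γ : K, IsIntegral ℤ γ ∧ (α : K) = β * γ) ↔ Nβ ∣ Nα := by
  have hβ0' : (β : K) ≠ 0 := by simpa using hβ0
  constructor
  · rintro ⟨γ, hγ, hαβγ⟩
    have hγE : γ ∈ E := by
      rw [← mul_div_cancel_left₀ γ hβ0', ← hαβγ]
      exact div_mem α.2 β.2
    refine norm_dvd_norm_of_eq_mul (z := ⟨γ, hγE⟩) ?_ (Subtype.ext hαβγ) hNα hNβ
    exact (isIntegral_algebraMap_iff (algebraMap E K).injective).mp hγ
  · intro h
    refine ⟨α / β, isIntegral_div_of_norm_dvd_norm hα0 hαd hβd hNα hNβ h, ?_⟩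
    rw [mul_div_cancel₀ _ hβ0']

end DNumber

/-- For nonzero cyclotomic d-numbers `α, β` with `L = ℚ(α,β)`, `β` divides `α` in
the ring of algebraic integers iff `N_L(β)` divides `N_L(α)` in `ℤ`. -/
theorem stmt18 (α β : ℂ) (hα0 : α ≠ 0) (hβ0 : β ≠ 0)
    (hαint : IsIntegral ℤ α) (hβint : IsIntegral ℤ β)
    (hαd : ∀ σ : ℂ ≃+* ℂ, IsIntegral ℤ (σ α / α))
    (hβd : ∀ σ : ℂ ≃+* ℂ, IsIntegral ℤ (σ β / β))
    (Nα Nβ : ℤ)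
    (hNα : (Nα : ℚ) = Algebra.norm ℚ
      (⟨α, IntermediateField.subset_adjoin ℚ {α, β} (by simp)⟩ :
        IntermediateField.adjoin ℚ {α, β}))
    (hNβ : (Nβ : ℚ) = Algebra.norm ℚ
      (⟨β, IntermediateField.subset_adjoin ℚ {α, β} (by simp)⟩ :
        IntermediateField.adjoin ℚ {α, β})) :
    (∃ γ : ℂ, IsIntegral ℤ γ ∧ α = β * γ) ↔ Nβ ∣ Nα := by
  have := finiteDimensional_adjoin_pair (K := ℚ) hαint.tower_top hβint.tower_top
  exact dvd_iff_norm_dvd_norm (fun h => hα0 (congrArg Subtype.val h))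
    (fun h => hβ0 (congrArg Subtype.val h)) hαd hβd hNα hNβ
end
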